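/- Let t = 2^a with a = 4c + d, 0 ≤ d ≤ 3, so ρ(t) = 8c + 2^d. Write each element of {0,…,ρ(t)−1} as 8l + m with 0 ≤ m ≤ 7 (l = c forces m < 2^d). Define γ_t(8l+m) = t(1 − 2^{−l}) + 8^l·m, and define χ_t(8l+m) = 0 if l = 0 and m = 0; χ_t(8l+m) = t·2^{−l} if l ≠ 0 and m = 0; χ_t(8l+m) = 8^l·ψ̂_{2^d}(m) if l = c and m ≠ 0; χ_t(8l+m) = t·2^{−l−1} + 8^l·ψ̂_8(m) if l ≠ c and m ≠ 0. Then for all x₁, x₂ ∈ {0,…,ρ(t)−1} with x₁ ≠ x₂, the Hamming weight |(γ_t(x₁) ⊕ γ_t(x₂)) ∧ (χ_t(x₁) ⊕ χ_t(x₂))| is odd. -/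

import Mathlib

/-- Hamming weight (popcount) of a natural number. -/
def hw (x : ℕ) : ℕ := (Nat.digits 2 x).sum

/-- The permutation `φ₁` of `{0,…,7}` sending `(0,1,2,3,4,5,6,7)` to `(0,1,2,3,4,7,5,6)`. -/
def phi1 : ℕ → ℕ
  | 5 => 7
  | 6 => 5
  | 7 => 6
  | x => x

/-- `ψ̂_{2^e}(m) = (2^e − φ₁(m)) mod 2^e`. -/
def psiHat (e m : ℕ) : ℕ := (2 ^ e - phi1 m) % 2 ^ e

/-- Adams–Lax–Phillips (Octonion) map `γ_t(8l+m) = t(1 − 2^{−l}) + 8^l·m` for `t = 2^a`. -/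
def gammaO (a x : ℕ) : ℕ :=
  (2 ^ a - 2 ^ a / 2 ^ (x / 8)) + 8 ^ (x / 8) * (x % 8)

/-- Adams–Lax–Phillips (Octonion) map `χ_t`:
`χ_t(8l+m) = 0` if `l = 0, m = 0`; `t·2^{−l}` if `l ≠ 0, m = 0`;
`8^l·ψ̂_{2^d}(m)` if `l = c, m ≠ 0`; `t·2^{−l−1} + 8^l·ψ̂_8(m)` if `l ≠ c, m ≠ 0`
(where `t = 2^a` and `a = 4c + d`, `0 ≤ d ≤ 3`). -/
def chiO (a x : ℕ) : ℕ :=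
  let l := x / 8
  let m := x % 8
  if m = 0 then (if l = 0 then 0 else 2 ^ a / 2 ^ l)
  else if l = a / 4 then 8 ^ l * psiHat (a % 4) m
  else 2 ^ a / 2 ^ (l + 1) + 8 ^ l * psiHat 3 m

/-!
The parity of `hw (x &&& y)` is the dot product over `𝔽₂` of the binary expansions of `x` and
`y` (`bitDot x y`); it is additive under `^^^` in each argument and vanishes when the bits of `x`
and `y` lie in disjoint ranges.

For `x = 8l + m`, both `γ_t(x)` and `χ_t(x)` split at bit `3c + d = a - c`: below it sits a block
`2^(3l) * m`, resp. `2^(3l) * ψ̂(m)`, of width 3 (width `d` at the top level `l = c`); above it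
`γ_t` has the run of ones `2^c - 2^(c-l)` and `χ_t` at most a single bit. So the form splits
into a low and a high contribution. For two indices at the same level the high parts of `γ_t`
cancel and the low contribution is the same statement for the `ψ̂` blocks of size at most 8,
checked by computation. At levels `l < L` the low blocks are disjoint and contribute
`[m ≠ 0] + [M ≠ 0]`, while the high parts contribute `[m ≠ 0] + [M = 0]`; the total is `1`.
-/

lemma hw_zero : hw 0 = 0 := rfl

lemma hw_eq_mod_two_add_hw_div_two (n : ℕ) : hw n = n % 2 + hw (n / 2) := by
  rcases Nat.eq_zero_or_pos n with rfl | hn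
  · rfl
  · rw [hw, Nat.digits_def' (by norm_num) hn, List.sum_cons, hw]

lemma hw_two_pow_mul (k x : ℕ) : hw (2 ^ k * x) = hw x := by
  induction k with
  | zero => rw [pow_zero, one_mul]
  | succ k ih =>
    rw [hw_eq_mod_two_add_hw_div_two, pow_succ', mul_assoc, Nat.mul_mod_right,
      Nat.mul_div_cancel_left _ two_pos, ih, zero_add]

lemma natCast_hw_xor (x y : ℕ) : (hw (x ^^^ y) : ZMod 2) = hw x + hw y := by
  induction x using Nat.strong_induction_on generalizing y with
  | _ x ih =>
    rcases Nat.eq_zero_or_pos x with rfl | hx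
    · simp [hw_zero]
    · rw [hw_eq_mod_two_add_hw_div_two (x ^^^ y), hw_eq_mod_two_add_hw_div_two x,
        hw_eq_mod_two_add_hw_div_two y, Nat.xor_div_two, Nat.xor_mod_two_eq]
      push_cast [ih (x / 2) (by omega) (y / 2), ZMod.natCast_mod]
      ring

lemma two_pow_mul_xor (k x y : ℕ) : 2 ^ k * x ^^^ 2 ^ k * y = 2 ^ k * (x ^^^ y) := by
  simp only [mul_comm (2 ^ k), ← Nat.shiftLeft_eq, Nat.shiftLeft_xor_distrib]

lemma two_pow_mul_and (k x y : ℕ) : 2 ^ k * x &&& 2 ^ k * y = 2 ^ k * (x &&& y) := by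
  simp only [mul_comm (2 ^ k), ← Nat.shiftLeft_eq, Nat.shiftLeft_and_distrib]

lemma two_pow_mul_add_eq_xor {k x : ℕ} (y : ℕ) (hx : x < 2 ^ k) :
    2 ^ k * y + x = 2 ^ k * y ^^^ x := by
  apply Nat.eq_of_testBit_eq
  intro j
  rw [Nat.testBit_two_pow_mul_add _ hx, Nat.testBit_xor, Nat.testBit_two_pow_mul]
  split_ifs with hj
  · simp [Nat.not_le.mpr hj]
  · simp [Nat.le_of_not_lt hj, Nat.testBit_lt_two_pow (hx.trans_le
      (Nat.pow_le_pow_right two_pos (Nat.le_of_not_lt hj)))]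

lemma and_two_pow_mul_eq_zero {k x : ℕ} (y : ℕ) (hx : x < 2 ^ k) : x &&& 2 ^ k * y = 0 := by
  apply Nat.eq_of_testBit_eq
  intro j
  rw [Nat.testBit_and, Nat.testBit_two_pow_mul, Nat.zero_testBit]
  by_cases hj : k ≤ j
  · simp [Nat.testBit_lt_two_pow (hx.trans_le (Nat.pow_le_pow_right two_pos hj))]
  · simp [hj]

lemma xor_xor_xor_comm (a b c d : ℕ) : (a ^^^ b) ^^^ (c ^^^ d) = (a ^^^ c) ^^^ (b ^^^ d) := by
  rw [Nat.xor_assoc, Nat.xor_left_comm b, ← Nat.xor_assoc]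

lemma testBit_two_pow_sub_two_pow {p q : ℕ} (h : q ≤ p) (j : ℕ) :
    (2 ^ p - 2 ^ q).testBit j = decide (q ≤ j ∧ j < p) := by
  have : 2 ^ p - 2 ^ q = 2 ^ q * (2 ^ (p - q) - 1) := by
    rw [Nat.mul_sub, mul_one, ← pow_add, Nat.add_sub_cancel' h]
  rw [this, Nat.testBit_two_pow_mul, Nat.testBit_two_pow_sub_one]
  grind

lemma two_pow_sub_two_pow_xor {p q r : ℕ} (hqr : q ≤ r) (hrp : r ≤ p) :
    (2 ^ p - 2 ^ q) ^^^ (2 ^ p - 2 ^ r) = 2 ^ r - 2 ^ q := by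
  apply Nat.eq_of_testBit_eq
  intro j
  simp only [Nat.testBit_xor, testBit_two_pow_sub_two_pow (hqr.trans hrp),
    testBit_two_pow_sub_two_pow hrp, testBit_two_pow_sub_two_pow hqr]
  grind

def bitDot (x y : ℕ) : ZMod 2 := hw (x &&& y)

lemma bitDot_zero_left (y : ℕ) : bitDot 0 y = 0 := by
  simp [bitDot, hw_zero]

lemma bitDot_zero_right (x : ℕ) : bitDot x 0 = 0 := by
  simp [bitDot, hw_zero]

lemma bitDot_xor_left (x y z : ℕ) : bitDot (x ^^^ y) z = bitDot x z + bitDot y z := by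
  rw [bitDot, Nat.and_xor_distrib_right, natCast_hw_xor]; rfl

lemma bitDot_xor_right (x y z : ℕ) : bitDot x (y ^^^ z) = bitDot x y + bitDot x z := by
  rw [bitDot, Nat.and_xor_distrib_left, natCast_hw_xor]; rfl

lemma bitDot_two_pow_mul (k x y : ℕ) : bitDot (2 ^ k * x) (2 ^ k * y) = bitDot x y := by
  rw [bitDot, two_pow_mul_and, hw_two_pow_mul, bitDot]

lemma bitDot_two_pow_right (x j : ℕ) : bitDot x (2 ^ j) = if x.testBit j then 1 else 0 := by
  rw [bitDot, Nat.and_two_pow, mul_comm, hw_two_pow_mul]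
  cases x.testBit j <;> rfl

lemma bitDot_xor_two_pow_mul {k x y : ℕ} (X Y : ℕ) (hx : x < 2 ^ k) (hy : y < 2 ^ k) :
    bitDot (x ^^^ 2 ^ k * X) (y ^^^ 2 ^ k * Y) = bitDot x y + bitDot X Y := by
  have hxY : bitDot x (2 ^ k * Y) = 0 := by
    rw [bitDot, and_two_pow_mul_eq_zero Y hx, hw_zero, Nat.cast_zero]
  have hXy : bitDot (2 ^ k * X) y = 0 := by
    rw [bitDot, Nat.land_comm, and_two_pow_mul_eq_zero X hy, hw_zero, Nat.cast_zero]
  rw [bitDot_xor_left, bitDot_xor_right, bitDot_xor_right, hxY, hXy, bitDot_two_pow_mul]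
  ring

lemma psiHat_lt (e m : ℕ) : psiHat e m < 2 ^ e :=
  Nat.mod_lt _ (Nat.two_pow_pos e)

lemma psiHat_zero (e : ℕ) : psiHat e 0 = 0 := by
  simp [psiHat, phi1]

lemma bitDot_psiHat_self {e m : ℕ} (he : e ≤ 3) (hm : m < 2 ^ e) :
    bitDot m (psiHat e m) = if m = 0 then 0 else 1 := by
  have key : ∀ e < 4, ∀ m < 2 ^ e, bitDot m (psiHat e m) = if m = 0 then 0 else 1 := by
    decide
  exact key e (by omega) m hm

lemma bitDot_xor_psiHat {e m M : ℕ} (he : e ≤ 3) (hm : m < 2 ^ e) (hM : M < 2 ^ e)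
    (hne : m ≠ M) : bitDot (m ^^^ M) (psiHat e m ^^^ psiHat e M) = 1 := by
  have key : ∀ e < 4, ∀ m < 2 ^ e, ∀ M < 2 ^ e, m ≠ M →
      bitDot (m ^^^ M) (psiHat e m ^^^ psiHat e M) = 1 := by
    decide
  exact key e (by omega) m hm M hM hne

def blockWidth (c d l : ℕ) : ℕ := if l = c then d else 3

def chiHigh (c l m : ℕ) : ℕ :=
  if m = 0 then (if l = 0 then 0 else 2 ^ (c - l)) else if l = c then 0 else 2 ^ (c - l - 1)

section

variable {a c d : ℕ}

lemma blockWidth_le (hd : d ≤ 3) (l : ℕ) : blockWidth c d l ≤ 3 := by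
  unfold blockWidth; split_ifs <;> omega

lemma exists_eq_eight_mul_add {x : ℕ} (hd : d ≤ 3) (hx : x < 8 * c + 2 ^ d) :
    ∃ l m, x = 8 * l + m ∧ l ≤ c ∧ m < 2 ^ blockWidth c d l := by
  have h8 : 2 ^ d ≤ 2 ^ 3 := Nat.pow_le_pow_right two_pos hd
  refine ⟨x / 8, x % 8, (Nat.div_add_mod x 8).symm, by omega, ?_⟩
  unfold blockWidth; split_ifs <;> omega

lemma two_pow_mul_lt_of_lt_blockWidth {l z : ℕ} (hl : l ≤ c) (hz : z < 2 ^ blockWidth c d l) :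
    2 ^ (3 * l) * z < 2 ^ (3 * c + d) :=
  calc 2 ^ (3 * l) * z < 2 ^ (3 * l) * 2 ^ blockWidth c d l :=
        Nat.mul_lt_mul_of_pos_left hz (Nat.two_pow_pos _)
    _ = 2 ^ (3 * l + blockWidth c d l) := (pow_add _ _ _).symm
    _ ≤ 2 ^ (3 * c + d) :=
        Nat.pow_le_pow_right two_pos (by unfold blockWidth; split_ifs <;> omega)

lemma gammaO_eq (hd : d ≤ 3) (ha : a = 4 * c + d) {l m : ℕ} (hl : l ≤ c)
    (hm : m < 2 ^ blockWidth c d l) :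
    gammaO a (8 * l + m) = 2 ^ (3 * l) * m ^^^ 2 ^ (3 * c + d) * (2 ^ c - 2 ^ (c - l)) := by
  have hm8 : m < 8 := hm.trans_le (Nat.pow_le_pow_right two_pos (blockWidth_le hd l))
  have hhigh : 2 ^ (3 * c + d) * (2 ^ c - 2 ^ (c - l)) = 2 ^ a - 2 ^ (a - l) := by
    rw [Nat.mul_sub, ← pow_add, ← pow_add]; congr 2 <;> omega
  rw [gammaO, show (8 * l + m) / 8 = l by omega, show (8 * l + m) % 8 = m by omega,
    Nat.pow_div (by omega) two_pos, ← hhigh,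
    show (8 : ℕ) ^ l = 2 ^ (3 * l) by rw [pow_mul]; rfl,
    two_pow_mul_add_eq_xor _ (two_pow_mul_lt_of_lt_blockWidth hl hm), Nat.xor_comm]

lemma chiO_eq (hd : d ≤ 3) (ha : a = 4 * c + d) {l m : ℕ} (hl : l ≤ c)
    (hm : m < 2 ^ blockWidth c d l) :
    chiO a (8 * l + m) =
      2 ^ (3 * l) * psiHat (blockWidth c d l) m ^^^ 2 ^ (3 * c + d) * chiHigh c l m := by
  have hm8 : m < 8 := hm.trans_le (Nat.pow_le_pow_right two_pos (blockWidth_le hd l))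
  rw [Nat.xor_comm,
    ← two_pow_mul_add_eq_xor _ (two_pow_mul_lt_of_lt_blockWidth hl (psiHat_lt _ m))]
  simp only [chiO, chiHigh, blockWidth, show (8 * l + m) / 8 = l by omega,
    show (8 * l + m) % 8 = m by omega, show a / 4 = c by omega, show a % 4 = d by omega,
    show (8 : ℕ) ^ l = 2 ^ (3 * l) by rw [pow_mul]; rfl]
  rcases eq_or_ne m 0 with rfl | hm0
  · simp only [if_true, psiHat_zero, mul_zero, add_zero]
    split_ifs
    · rfl
    · rw [Nat.pow_div (by omega) two_pos, ← pow_add]; congr 1; omega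
  · simp only [hm0, if_false]
    split_ifs
    · simp
    · rw [Nat.pow_div (by omega) two_pos, ← pow_add]; congr 2; omega

lemma bitDot_gammaO_xor_chiO (hd : d ≤ 3) (ha : a = 4 * c + d) {l m L M : ℕ}
    (hl : l ≤ c) (hm : m < 2 ^ blockWidth c d l) (hL : L ≤ c) (hM : M < 2 ^ blockWidth c d L) :
    bitDot (gammaO a (8 * l + m) ^^^ gammaO a (8 * L + M))
        (chiO a (8 * l + m) ^^^ chiO a (8 * L + M)) =
      bitDot (2 ^ (3 * l) * m ^^^ 2 ^ (3 * L) * M)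
          (2 ^ (3 * l) * psiHat (blockWidth c d l) m ^^^
            2 ^ (3 * L) * psiHat (blockWidth c d L) M) +
        bitDot ((2 ^ c - 2 ^ (c - l)) ^^^ (2 ^ c - 2 ^ (c - L)))
          (chiHigh c l m ^^^ chiHigh c L M) := by
  rw [gammaO_eq hd ha hl hm, gammaO_eq hd ha hL hM, chiO_eq hd ha hl hm, chiO_eq hd ha hL hM,
    xor_xor_xor_comm, xor_xor_xor_comm (2 ^ (3 * l) * psiHat _ m), two_pow_mul_xor,
    two_pow_mul_xor]
  exact bitDot_xor_two_pow_mul _ _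
    (Nat.xor_lt_two_pow (two_pow_mul_lt_of_lt_blockWidth hl hm)
      (two_pow_mul_lt_of_lt_blockWidth hL hM))
    (Nat.xor_lt_two_pow (two_pow_mul_lt_of_lt_blockWidth hl (psiHat_lt _ m))
      (two_pow_mul_lt_of_lt_blockWidth hL (psiHat_lt _ M)))

end

lemma bitDot_psiHat_blocks_of_lt {i j e E m M : ℕ} (hij : i + 3 ≤ j) (he : e ≤ 3)
    (hE : E ≤ 3) (hm : m < 2 ^ e) (hM : M < 2 ^ E) :
    bitDot (2 ^ i * m ^^^ 2 ^ j * M) (2 ^ i * psiHat e m ^^^ 2 ^ j * psiHat E M) =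
      (if m = 0 then 0 else 1) + (if M = 0 then 0 else 1) := by
  have hlt : ∀ z < 2 ^ e, 2 ^ i * z < 2 ^ j := fun z hz =>
    calc 2 ^ i * z < 2 ^ i * 2 ^ e := Nat.mul_lt_mul_of_pos_left hz (Nat.two_pow_pos _)
      _ = 2 ^ (i + e) := (pow_add _ _ _).symm
      _ ≤ 2 ^ j := Nat.pow_le_pow_right two_pos (by omega)
  rw [bitDot_xor_two_pow_mul _ _ (hlt m hm) (hlt _ (psiHat_lt e m)), bitDot_two_pow_mul,
    bitDot_psiHat_self he hm, bitDot_psiHat_self hE hM]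

lemma bitDot_chiHigh_of_lt {c l L : ℕ} (m M : ℕ) (hlL : l < L) (hL : L ≤ c) :
    bitDot ((2 ^ c - 2 ^ (c - l)) ^^^ (2 ^ c - 2 ^ (c - L)))
        (chiHigh c l m ^^^ chiHigh c L M) =
      (if m = 0 then 0 else 1) + (if M = 0 then 1 else 0) := by
  rw [Nat.xor_comm, two_pow_sub_two_pow_xor (by omega) (by omega), bitDot_xor_right]
  have hbit := testBit_two_pow_sub_two_pow (show c - L ≤ c - l by omega)
  -- the run of ones `[c - L, c - l)` contains the bits `c - l - 1` and `c - L`,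
  -- but neither `c - l` nor `c - L - 1`
  congr 1 <;> unfold chiHigh <;> split_ifs <;>
    simp [bitDot_zero_right, bitDot_two_pow_right, hbit] <;> omega

/-- the Adams–Lax–Phillips Octonion maps `(γ_t, χ_t)` satisfy the odd
Hamming-weight condition: for distinct `x₁, x₂ < ρ(t) = 8c + 2^d`,
`|(γ_t(x₁) ⊕ γ_t(x₂)) ∧ (χ_t(x₁) ⊕ χ_t(x₂))|` is odd. -/
theorem stmt14 (a c d : ℕ) (hd : d ≤ 3) (ha : a = 4 * c + d)
    (x₁ x₂ : ℕ) (h₁ : x₁ < 8 * c + 2 ^ d) (h₂ : x₂ < 8 * c + 2 ^ d) (hne : x₁ ≠ x₂) :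
    Odd (hw ((gammaO a x₁ ^^^ gammaO a x₂) &&& (chiO a x₁ ^^^ chiO a x₂))) := by
  rw [← ZMod.natCast_eq_one_iff_odd]
  change bitDot _ _ = 1
  obtain ⟨l, m, rfl, hl, hm⟩ := exists_eq_eight_mul_add hd h₁
  obtain ⟨L, M, rfl, hL, hM⟩ := exists_eq_eight_mul_add hd h₂
  wlog hle : l ≤ L generalizing l m L M
  · rw [Nat.xor_comm (gammaO a _), Nat.xor_comm (chiO a _)]
    exact this L M h₂ hL hM l m h₁ hne.symm hl hm (by omega)
  rw [bitDot_gammaO_xor_chiO hd ha hl hm hL hM]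
  rcases hle.lt_or_eq with hlt | rfl
  · rw [bitDot_psiHat_blocks_of_lt (by omega) (blockWidth_le hd l) (blockWidth_le hd L) hm hM,
      bitDot_chiHigh_of_lt m M hlt hL]
    split_ifs <;> decide
  · rw [Nat.xor_self, bitDot_zero_left, add_zero, two_pow_mul_xor, two_pow_mul_xor,
      bitDot_two_pow_mul]
    exact bitDot_xor_psiHat (blockWidth_le hd l) hm hM (by omega)
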